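/- arXiv:2204.13910 — 6 statements merged into one kernel-verified Lean document; each statement's English description precedes it below -/
import Mathlib

section
/- The 2-dimensional real algebra A_0^+ with multiplication e_1e_1 = e_2, e_1e_2 = −e_2, e_2e_1 = −e_1, e_2e_2 = e_1 is not isomorphic to the 2-dimensional real algebra A_1 with multiplication e_1e_1 = e_1, e_1e_2 = e_1, e_2e_1 = e_2, e_2e_2 = e_2. -/
/-- Multiplication on ℝ² determined by structural constants `c`:
`(x * y) k = ∑ i j, x i * y j * c i j k`. -/
def amul (c : Fin 2 → Fin 2 → Fin 2 → ℝ) (x y : Fin 2 → ℝ) : Fin 2 → ℝ :=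
  fun k => ∑ i : Fin 2, ∑ j : Fin 2, x i * y j * c i j k

/-- Structural constants of A₀⁺ : e₁e₁ = e₂, e₁e₂ = -e₂, e₂e₁ = -e₁, e₂e₂ = e₁. -/
def cA0p : Fin 2 → Fin 2 → Fin 2 → ℝ :=
  ![![![0, 1], ![0, -1]], ![![-1, 0], ![1, 0]]]

/-- Structural constants of A₁ : e₁e₁ = e₁, e₁e₂ = e₁, e₂e₁ = e₂, e₂e₂ = e₂. -/
def cA1 : Fin 2 → Fin 2 → Fin 2 → ℝ :=
  ![![![1, 0], ![1, 0]], ![![0, 1], ![0, 1]]]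

/-- A₀⁺ is not isomorphic to A₁. -/
theorem stmt_4 :
    ¬ ∃ f : (Fin 2 → ℝ) ≃ₗ[ℝ] (Fin 2 → ℝ),
        ∀ x y : Fin 2 → ℝ, f (amul cA0p x y) = amul cA1 (f x) (f y) := by
  rintro ⟨f, hf⟩
  set e : Fin 2 → ℝ := ![1, 0] with he_def
  have he : amul cA1 e e = e := by
    funext k
    fin_cases k <;> simp [amul, cA1, Fin.sum_univ_two, he_def]
  set a : Fin 2 → ℝ := f.symm e with ha_def
  have hfa : f a = e := f.apply_symm_apply e
  have key : amul cA0p a a = a := by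
    apply f.injective
    rw [hf, hfa, he]
  have h0 := congrFun key 0
  have h1 := congrFun key 1
  simp [amul, cA0p, Fin.sum_univ_two] at h0 h1
  have hd : (a 0 - a 1) * (1 + (a 0 - a 1) ^ 2) = 0 := by
    linear_combination (1 + (a 0 - a 1)) * h1 + ((a 0 - a 1) - 1) * h0
  have hpos : (0:ℝ) < 1 + (a 0 - a 1) ^ 2 := by positivity
  have hd0 : a 0 = a 1 := by
    have := mul_eq_zero.mp hd
    rcases this with h | h
    · linarith
    · linarith
  have ha0 : a 0 = 0 := by nlinarith [h0, h1]
  have ha1 : a 1 = 0 := hd0 ▸ ha0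
  have : f a = f 0 := by
    congr 1
    funext k
    fin_cases k <;> simp [ha0, ha1]
  rw [hfa, map_zero] at this
  have := congrFun this 0
  simp [he_def] at this
end

section
/- For c_1, c_2 ∈ (0,1) with c_1 ≠ c_2, the algebra A_{c_1}^+ is not isomorphic to A_{c_2}^+, where A_c^+ has multiplication e_1e_1 = c·e_1 + s·e_2, e_1e_2 = c·e_1 − s·e_2, e_2e_1 = −s·e_1 + c·e_2, e_2e_2 = s·e_1 + c·e_2 with s = √(1−c²). -/
/-- Structural constants of the algebra A_c^{(s)} of the rotational flow. -/
def cAc (c s : ℝ) : Fin 2 → Fin 2 → Fin 2 → ℝ :=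
  ![![![c, s], ![c, -s]], ![![-s, c], ![s, c]]]

lemma amul_zero' (c s : ℝ) (x y : Fin 2 → ℝ) :
    amul (cAc c s) x y 0 = x 0 * y 0 * c + x 0 * y 1 * c + x 1 * y 0 * (-s) + x 1 * y 1 * s := by
  simp [amul, cAc, Fin.sum_univ_two]; ring

lemma amul_one' (c s : ℝ) (x y : Fin 2 → ℝ) :
    amul (cAc c s) x y 1 = x 0 * y 0 * s + x 0 * y 1 * (-s) + x 1 * y 0 * c + x 1 * y 1 * c := by
  simp [amul, cAc, Fin.sum_univ_two]; ring

/-- For c₁ ≠ c₂ in (0,1), the algebras A_{c₁}⁺ and A_{c₂}⁺ (with s = √(1-c²)) are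
not isomorphic. -/
theorem stmt_8 (c₁ c₂ : ℝ) (h₁ : c₁ ∈ Set.Ioo (0 : ℝ) 1) (h₂ : c₂ ∈ Set.Ioo (0 : ℝ) 1)
    (hne : c₁ ≠ c₂) :
    ¬ ∃ f : (Fin 2 → ℝ) ≃ₗ[ℝ] (Fin 2 → ℝ),
        ∀ x y : Fin 2 → ℝ,
          f (amul (cAc c₁ (Real.sqrt (1 - c₁ ^ 2))) x y) =
            amul (cAc c₂ (Real.sqrt (1 - c₂ ^ 2))) (f x) (f y) := by
  obtain ⟨hc₁0, hc₁1⟩ := h₁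
  obtain ⟨hc₂0, hc₂1⟩ := h₂
  set s₁ := Real.sqrt (1 - c₁ ^ 2) with hs₁def
  set s₂ := Real.sqrt (1 - c₂ ^ 2) with hs₂def
  have hs₁sq : s₁ ^ 2 = 1 - c₁ ^ 2 := Real.sq_sqrt (by nlinarith)
  have hs₂sq : s₂ ^ 2 = 1 - c₂ ^ 2 := Real.sq_sqrt (by nlinarith)
  have hs₁0 : 0 < s₁ := Real.sqrt_pos.mpr (by nlinarith)
  have hs₂0 : 0 < s₂ := Real.sqrt_pos.mpr (by nlinarith)
  rintro ⟨f, hf⟩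
  set u : Fin 2 → ℝ := ![1/2, 1/2] with hu
  set v : Fin 2 → ℝ := ![1/2, -(1/2)] with hv
  have hu0 : u 0 = 1/2 := rfl
  have hu1 : u 1 = 1/2 := rfl
  have hv0 : v 0 = 1/2 := rfl
  have hv1 : v 1 = -(1/2) := rfl
  have key : ∀ (x y z : Fin 2 → ℝ) (t : ℝ),
      amul (cAc c₁ s₁) x y 0 = (t • z) 0 → amul (cAc c₁ s₁) x y 1 = (t • z) 1 →
      amul (cAc c₁ s₁) x y = t • z := by
    intro x y z t h0 h1
    funext k; fin_cases k
    · exact h0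
    · exact h1
  have e1 : amul (cAc c₁ s₁) u u = c₁ • u := by
    refine key _ _ _ _ ?_ ?_ <;>
      simp only [amul_zero', amul_one', hu0, hu1, Pi.smul_apply, smul_eq_mul] <;> ring
  have e2 : amul (cAc c₁ s₁) u v = (-s₁) • v := by
    refine key _ _ _ _ ?_ ?_ <;>
      simp only [amul_zero', amul_one', hu0, hu1, hv0, hv1, Pi.smul_apply, smul_eq_mul] <;> ring
  have e3 : amul (cAc c₁ s₁) v u = c₁ • v := by
    refine key _ _ _ _ ?_ ?_ <;>
      simp only [amul_zero', amul_one', hu0, hu1, hv0, hv1, Pi.smul_apply, smul_eq_mul] <;> ring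
  have e4 : amul (cAc c₁ s₁) v v = s₁ • u := by
    refine key _ _ _ _ ?_ ?_ <;>
      simp only [amul_zero', amul_one', hu0, hu1, hv0, hv1, Pi.smul_apply, smul_eq_mul] <;> ring
  have H1 := hf u u; rw [e1, map_smul] at H1
  have H2 := hf u v; rw [e2, map_smul] at H2
  have H3 := hf v u; rw [e3, map_smul] at H3
  have H4 := hf v v; rw [e4, map_smul] at H4
  have H10 := congrFun H1 0
  have H11 := congrFun H1 1
  have H20 := congrFun H2 0
  have H21 := congrFun H2 1
  have H30 := congrFun H3 0
  have H31 := congrFun H3 1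
  have H40 := congrFun H4 0
  have H41 := congrFun H4 1
  rw [amul_zero', Pi.smul_apply, smul_eq_mul] at H10 H20 H30 H40
  rw [amul_one', Pi.smul_apply, smul_eq_mul] at H11 H21 H31 H41
  set a0 := f u 0 with ha0
  set a1 := f u 1 with ha1
  set b0 := f v 0 with hb0
  set b1 := f v 1 with hb1
  -- σ-component of u∘v and v∘u force b0 + b1 = 0
  have hb : b0 + b1 = 0 := by
    have key : (c₁ + s₁) * (b0 + b1) = 0 := by linear_combination H30 + H31 - H20 - H21
    exact (mul_eq_zero.mp key).resolve_left (by positivity)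
  -- δ-component of v∘v forces a0 - a1 = 0
  have hg : a0 - a1 = 0 := by
    have key : s₁ * (a0 - a1) = 0 := by
      linear_combination H40 - H41 + (c₂ - s₂) * (b0 - b1) * hb
    exact (mul_eq_zero.mp key).resolve_left (ne_of_gt hs₁0)
  have hfu : f u ≠ 0 := by
    intro h
    have hu0' : u = 0 := f.injective (h.trans (map_zero f).symm)
    have := congrFun hu0' 0
    rw [hu0] at this
    norm_num at this
  have hfv : f v ≠ 0 := by
    intro h
    have hv0' : v = 0 := f.injective (h.trans (map_zero f).symm)
    have := congrFun hv0' 0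
    rw [hv0] at this
    norm_num at this
  have ha : a0 + a1 ≠ 0 := by
    intro h
    apply hfu
    funext k; fin_cases k
    · show f u 0 = 0; rw [← ha0]; linarith
    · show f u 1 = 0; rw [← ha1]; linarith
  have he : b0 - b1 ≠ 0 := by
    intro h
    apply hfv
    funext k; fin_cases k
    · show f v 0 = 0; rw [← hb0]; linarith
    · show f v 1 = 0; rw [← hb1]; linarith
  have hca : c₁ = c₂ * (a0 + a1) := by
    apply mul_right_cancel₀ ha
    linear_combination H10 + H11 + s₂ * (a0 - a1) * hg
  have hsa : s₁ = s₂ * (a0 + a1) := by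
    apply mul_right_cancel₀ he
    linear_combination H21 - H20 - c₂ * (b0 + b1) * hg
  have h1 : c₁ ^ 2 = c₂ ^ 2 * (a0 + a1) ^ 2 := by rw [hca]; ring
  have h2 : s₁ ^ 2 = s₂ ^ 2 * (a0 + a1) ^ 2 := by rw [hsa]; ring
  have hsq : (a0 + a1) ^ 2 = 1 := by
    linear_combination hs₁sq - h1 - h2 - (a0 + a1) ^ 2 * hs₂sq
  have hc2 : c₁ ^ 2 = c₂ ^ 2 := by rw [h1, hsq]; ring
  have : (c₁ - c₂) * (c₁ + c₂) = 0 := by linear_combination hc2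
  rcases mul_eq_zero.mp this with h | h
  · exact hne (by linarith)
  · linarith
end

section
/- For c_1, c_2 ∈ (0,1), the algebra A_{c_1}^+ (with s = +√(1−c_1²)) is not isomorphic to A_{c_2}^− (with s = −√(1−c_2²)), where A_c^{±} has multiplication e_1e_1 = c·e_1 + s·e_2, e_1e_2 = c·e_1 − s·e_2, e_2e_1 = −s·e_1 + c·e_2, e_2e_2 = s·e_1 + c·e_2. -/
lemma amul_comm_sub (c s : ℝ) (x y : Fin 2 → ℝ) :
    amul (cAc c s) x y - amul (cAc c s) y x
      = ((x 0 * y 1 - x 1 * y 0) * (c + s)) • ![(1:ℝ), -1] := by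
  funext k
  fin_cases k <;>
    simp [amul, cAc, Fin.sum_univ_two] <;> ring

lemma amul_smul (c : Fin 2 → Fin 2 → Fin 2 → ℝ) (a b : ℝ) (x y : Fin 2 → ℝ) :
    amul c (a • x) (b • y) = (a * b) • amul c x y := by
  funext k
  simp [amul, Fin.sum_univ_two]
  ring

lemma amul_vv (c s : ℝ) :
    amul (cAc c s) ![(1:ℝ), -1] ![(1:ℝ), -1] = (2 * s) • ![(1:ℝ), 1] := by
  funext k
  fin_cases k <;> simp [amul, cAc, Fin.sum_univ_two] <;> ring

lemma amul_uu (c s : ℝ) :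
    amul (cAc c s) ![(1:ℝ), 1] ![(1:ℝ), 1] = (2 * c) • ![(1:ℝ), 1] := by
  funext k
  fin_cases k <;> simp [amul, cAc, Fin.sum_univ_two] <;> ring

lemma amul_e1e2 (c s : ℝ) :
    amul (cAc c s) ![(1:ℝ), 0] ![(0:ℝ), 1] = ![c, -s] := by
  funext k
  fin_cases k <;> simp [amul, cAc, Fin.sum_univ_two]

lemma amul_e2e1 (c s : ℝ) :
    amul (cAc c s) ![(0:ℝ), 1] ![(1:ℝ), 0] = ![-s, c] := by
  funext k
  fin_cases k <;> simp [amul, cAc, Fin.sum_univ_two]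

/-- For c₁, c₂ ∈ (0,1), the algebra A_{c₁}⁺ (s = +√(1-c₁²)) is not isomorphic to
A_{c₂}⁻ (s = -√(1-c₂²)). -/
theorem stmt_9 (c₁ c₂ : ℝ) (h₁ : c₁ ∈ Set.Ioo (0 : ℝ) 1) (h₂ : c₂ ∈ Set.Ioo (0 : ℝ) 1) :
    ¬ ∃ f : (Fin 2 → ℝ) ≃ₗ[ℝ] (Fin 2 → ℝ),
        ∀ x y : Fin 2 → ℝ,
          f (amul (cAc c₁ (Real.sqrt (1 - c₁ ^ 2))) x y) =
            amul (cAc c₂ (-Real.sqrt (1 - c₂ ^ 2))) (f x) (f y) := by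
  obtain ⟨hc1, hc1'⟩ := h₁
  obtain ⟨hc2, hc2'⟩ := h₂
  rintro ⟨f, hf⟩
  set s₁ : ℝ := Real.sqrt (1 - c₁ ^ 2) with hs1def
  set s₂ : ℝ := -Real.sqrt (1 - c₂ ^ 2) with hs2def
  have hs1 : 0 < s₁ := Real.sqrt_pos.2 (by nlinarith)
  have hs2 : s₂ < 0 := by
    have h : 0 < Real.sqrt (1 - c₂ ^ 2) := Real.sqrt_pos.2 (by nlinarith)
    simp only [hs2def]
    linarith
  set v : Fin 2 → ℝ := ![(1:ℝ), -1] with hv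
  set u : Fin 2 → ℝ := ![(1:ℝ), 1] with hu
  have hcs1 : (0:ℝ) < c₁ + s₁ := by linarith
  -- commutator: f v is a multiple of v
  set e1 : Fin 2 → ℝ := ![(1:ℝ), 0] with he1
  set e2 : Fin 2 → ℝ := ![(0:ℝ), 1] with he2
  have hcomm : f (amul (cAc c₁ s₁) e1 e2 - amul (cAc c₁ s₁) e2 e1)
      = amul (cAc c₂ s₂) (f e1) (f e2) - amul (cAc c₂ s₂) (f e2) (f e1) := by
    rw [map_sub, hf, hf]
  rw [amul_comm_sub, amul_comm_sub] at hcomm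
  have he12 : e1 0 * e2 1 - e1 1 * e2 0 = 1 := by simp [he1, he2]
  rw [he12, one_mul] at hcomm
  set D : ℝ := (f e1 0 * f e2 1 - f e1 1 * f e2 0) * (c₂ + s₂) with hD
  set lam : ℝ := (c₁ + s₁)⁻¹ * D with hlam
  have hfv : f v = lam • v := by
    have : f ((c₁ + s₁) • v) = D • v := by
      rw [map_smul]
      rw [← hcomm]
      rw [map_smul]
    have h2 : (c₁ + s₁) • f v = D • v := by
      rw [← map_smul]; exact this
    have := congrArg (fun z => (c₁ + s₁)⁻¹ • z) h2
    simpa [smul_smul, inv_mul_cancel₀ hcs1.ne', hlam] using this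
  have hvne : v ≠ 0 := by
    intro h
    have := congrFun h 0
    simp [hv] at this
  have hlamne : lam ≠ 0 := by
    intro h
    rw [h, zero_smul] at hfv
    exact hvne (f.injective (by simpa using hfv))
  -- f u
  set mu : ℝ := lam ^ 2 * s₂ / s₁ with hmu
  have hfu : f u = mu • u := by
    have h1 : f (amul (cAc c₁ s₁) v v) = amul (cAc c₂ s₂) (f v) (f v) := hf v v
    rw [amul_vv, hfv, amul_smul, amul_vv, map_smul] at h1
    -- h1 : (2*s₁) • f u = (lam*lam) • ((2*s₂) • u)
    have h2 : (2 * s₁) • f u = (lam * lam * (2 * s₂)) • u := by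
      rw [h1, smul_smul]
    have hne : (2 * s₁) ≠ 0 := by positivity
    have h3 : f u = ((2 * s₁)⁻¹ * (lam * lam * (2 * s₂))) • u := by
      apply smul_right_injective (Fin 2 → ℝ) hne
      show (2 * s₁) • f u = (2 * s₁) • (((2 * s₁)⁻¹ * (lam * lam * (2 * s₂))) • u)
      rw [h2, smul_smul]
      congr 1
      field_simp
    rw [h3, hmu]
    congr 1
    field_simp
  have hlamsq : 0 < lam ^ 2 := by positivity
  have hmuneg : mu < 0 := by
    rw [hmu]
    exact div_neg_of_neg_of_pos (mul_neg_of_pos_of_neg hlamsq hs2) hs1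
  -- idempotent relation
  have h1 : f (amul (cAc c₁ s₁) u u) = amul (cAc c₂ s₂) (f u) (f u) := hf u u
  rw [amul_uu, map_smul, hfu, amul_smul, amul_uu, smul_smul, smul_smul] at h1
  have h0 := congrFun h1 0
  simp [hu] at h0
  -- h0 : 2 * c₁ * mu = mu * mu * (2 * c₂)
  nlinarith [hmuneg, hc1, hc2]
end

section
/- Any isomorphism between A_{c_1}^+ and A_{c_2}^+ (for c_1, c_2 ∈ (0,1), with associated sin values s_i = √(1−c_i²)) forces the basis change matrix to be diagonal or antidiagonal with x_1 = y_2 = u, x_2 = y_1 = 0 (or x_1 = y_2 = 0, x_2 = y_1 = u) where u = cos t_2/cos t_1, and requires sin(t_2 − t_1) = 0. -/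
set_option maxHeartbeats 2000000 in
/-- Any isomorphism between A_{cos t₁}⁺ and A_{cos t₂}⁺ (cos tᵢ ∈ (0,1),
sin tᵢ = √(1-cos²tᵢ)), i.e. any basis change e₁' = x₁e₁ + x₂e₂, e₂' = y₁e₁ + y₂e₂ with
x₁y₂ ≠ x₂y₁ under which e₁', e₂' obey the multiplication table of A_{cos t₂}⁺, forces
x₁ = y₂ = cos t₂ / cos t₁, x₂ = y₁ = 0 (or x₂ = y₁ = cos t₂ / cos t₁, x₁ = y₂ = 0),
and requires sin(t₂ - t₁) = 0. -/
theorem stmt_10 (t₁ t₂ x₁ x₂ y₁ y₂ : ℝ)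
    (hc₁ : Real.cos t₁ ∈ Set.Ioo (0 : ℝ) 1) (hc₂ : Real.cos t₂ ∈ Set.Ioo (0 : ℝ) 1)
    (hs₁ : Real.sin t₁ = Real.sqrt (1 - Real.cos t₁ ^ 2))
    (hs₂ : Real.sin t₂ = Real.sqrt (1 - Real.cos t₂ ^ 2))
    (hdet : x₁ * y₂ ≠ x₂ * y₁)
    (h11 : amul (cAc (Real.cos t₁) (Real.sin t₁)) ![x₁, x₂] ![x₁, x₂] =
      Real.cos t₂ • ![x₁, x₂] + Real.sin t₂ • ![y₁, y₂])
    (h12 : amul (cAc (Real.cos t₁) (Real.sin t₁)) ![x₁, x₂] ![y₁, y₂] =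
      Real.cos t₂ • ![x₁, x₂] - Real.sin t₂ • ![y₁, y₂])
    (h21 : amul (cAc (Real.cos t₁) (Real.sin t₁)) ![y₁, y₂] ![x₁, x₂] =
      -Real.sin t₂ • ![x₁, x₂] + Real.cos t₂ • ![y₁, y₂])
    (h22 : amul (cAc (Real.cos t₁) (Real.sin t₁)) ![y₁, y₂] ![y₁, y₂] =
      Real.sin t₂ • ![x₁, x₂] + Real.cos t₂ • ![y₁, y₂]) :
    ((x₂ = 0 ∧ y₁ = 0 ∧ x₁ = Real.cos t₂ / Real.cos t₁ ∧ y₂ = Real.cos t₂ / Real.cos t₁) ∨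
     (x₁ = 0 ∧ y₂ = 0 ∧ x₂ = Real.cos t₂ / Real.cos t₁ ∧ y₁ = Real.cos t₂ / Real.cos t₁)) ∧
    Real.sin (t₂ - t₁) = 0 := by
  obtain ⟨hc1p, hc1l⟩ := hc₁
  obtain ⟨hc2p, hc2l⟩ := hc₂
  set c1 := Real.cos t₁ with hc1def
  set c2 := Real.cos t₂ with hc2def
  set s1 := Real.sin t₁ with hs1def
  set s2 := Real.sin t₂ with hs2def
  have hs1p : 0 < s1 := by rw [hs₁]; exact Real.sqrt_pos.mpr (by nlinarith)
  have hs2p : 0 < s2 := by rw [hs₂]; exact Real.sqrt_pos.mpr (by nlinarith)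
  have e1 := congrFun h11 0
  have e2 := congrFun h11 1
  have e3 := congrFun h12 0
  have e4 := congrFun h12 1
  have e5 := congrFun h21 0
  have e6 := congrFun h21 1
  have e7 := congrFun h22 0
  have e8 := congrFun h22 1
  simp only [amul, cAc, Fin.sum_univ_two] at e1 e2 e3 e4 e5 e6 e7 e8
  simp at e1 e2 e3 e4 e5 e6 e7 e8
  clear h11 h12 h21 h22 hs₁ hs₂
  have hA : x₁ + x₂ - y₁ - y₂ = 0 := by
    have h : (c2 + s2) * (x₁ + x₂ - y₁ - y₂) = 0 := by
      linear_combination e5 + e6 - e3 - e4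
    rcases mul_eq_zero.mp h with h' | h'
    · linarith
    · exact h'
  have hC1 : s1 * x₂ * (x₂ - y₂ - x₁ + y₁) = 2 * s2 * y₁ := by
    linear_combination e1 - e3 - (c1 * x₁) * hA
  have hC2 : -(s1 * x₁ * (x₂ - y₂ - x₁ + y₁)) = 2 * s2 * y₂ := by
    linear_combination e2 - e4 - (c1 * x₂) * hA
  have hC3 : -(s1 * y₂ * (x₂ - y₂ - x₁ + y₁)) = 2 * s2 * x₁ := by
    linear_combination e7 - e5 + (c1 * y₁) * hA
  have hC4 : s1 * y₁ * (x₂ - y₂ - x₁ + y₁) = 2 * s2 * x₂ := by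
    linear_combination e8 - e6 + (c1 * y₂) * hA
  have hx1K : x₁ * (s1 ^ 2 * (x₂ - y₂ - x₁ + y₁) ^ 2 - 4 * s2 ^ 2) = 0 := by
    linear_combination (-(s1 * (x₂ - y₂ - x₁ + y₁))) * hC2 + (2 * s2) * hC3
  have hx2K : x₂ * (s1 ^ 2 * (x₂ - y₂ - x₁ + y₁) ^ 2 - 4 * s2 ^ 2) = 0 := by
    linear_combination (s1 * (x₂ - y₂ - x₁ + y₁)) * hC1 + (2 * s2) * hC4
  by_cases hK : s1 ^ 2 * (x₂ - y₂ - x₁ + y₁) ^ 2 - 4 * s2 ^ 2 = 0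
  · have hfac : (s1 * (x₂ - y₂ - x₁ + y₁) - 2 * s2) * (s1 * (x₂ - y₂ - x₁ + y₁) + 2 * s2) = 0 := by
      linear_combination hK
    rcases mul_eq_zero.mp hfac with hP | hP
    · -- s1 * B = 2 s2 : antidiagonal case
      have hP' : s1 * (x₂ - y₂ - x₁ + y₁) = 2 * s2 := by linarith
      have hy1 : y₁ = x₂ := by
        have h : 2 * s2 * x₂ = 2 * s2 * y₁ := by linear_combination hC1 - x₂ * hP'
        have := mul_left_cancel₀ (by positivity : (2 : ℝ) * s2 ≠ 0) h
        linarith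
      have hy2 : y₂ = -x₁ := by
        have h : 2 * s2 * (-x₁) = 2 * s2 * y₂ := by linear_combination hC2 + x₁ * hP'
        have := mul_left_cancel₀ (by positivity : (2 : ℝ) * s2 ≠ 0) h
        linarith
      have hb : s1 * x₂ = s2 := by
        linear_combination hP' / 2 + (s1 / 2) * hy2 - (s1 / 2) * hy1
      have hx2ne : x₂ ≠ 0 := by
        intro h; rw [h, mul_zero] at hb; linarith
      have key : s1 * x₁ * (x₁ ^ 2 + x₂ ^ 2) = 0 := by
        linear_combination x₁ * e2 - x₂ * e1 + (x₁ ^ 2 + x₂ ^ 2) * hb +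
          (s2 * x₁) * hy2 - (s2 * x₂) * hy1
      have hx1z : x₁ = 0 := by
        rcases mul_eq_zero.mp key with h | h
        · rcases mul_eq_zero.mp h with h' | h'
          · exact absurd h' (ne_of_gt hs1p)
          · exact h'
        · exfalso
          have hx2sq : 0 < x₂ ^ 2 := by positivity
          nlinarith [sq_nonneg x₁]
      have hc1x2 : c1 * x₂ = c2 := by
        have h : c1 * x₂ * x₂ = c2 * x₂ := by
          linear_combination e2 + s2 * hy2 + (-(s1 * x₁) + s1 * x₂ - c1 * x₂ - s2) * hx1z
        exact mul_right_cancel₀ hx2ne h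
      have hx2val : x₂ = c2 / c1 := by
        rw [eq_div_iff (ne_of_gt hc1p)]; linear_combination hc1x2
      refine ⟨Or.inr ⟨hx1z, by rw [hy2, hx1z, neg_zero], hx2val, by rw [hy1]; exact hx2val⟩, ?_⟩
      rw [Real.sin_sub, ← hs1def, ← hs2def, ← hc1def, ← hc2def]
      linear_combination s1 * hc1x2 - c1 * hb
    · -- s1 * B = -2 s2 : diagonal case
      have hP' : s1 * (x₂ - y₂ - x₁ + y₁) = -(2 * s2) := by linarith
      have hy1 : y₁ = -x₂ := by
        have h : 2 * s2 * (-x₂) = 2 * s2 * y₁ := by linear_combination hC1 - x₂ * hP'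
        have := mul_left_cancel₀ (by positivity : (2 : ℝ) * s2 ≠ 0) h
        linarith
      have hy2 : y₂ = x₁ := by
        have h : 2 * s2 * x₁ = 2 * s2 * y₂ := by linear_combination hC2 + x₁ * hP'
        have := mul_left_cancel₀ (by positivity : (2 : ℝ) * s2 ≠ 0) h
        linarith
      have hb : s1 * x₁ = s2 := by
        linear_combination -hP' / 2 + (s1 / 2) * hy1 - (s1 / 2) * hy2
      have hx1ne : x₁ ≠ 0 := by
        intro h; rw [h, mul_zero] at hb; linarith
      have key : s1 * x₂ * (x₁ ^ 2 + x₂ ^ 2) = 0 := by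
        linear_combination -(x₁ * e2) + x₂ * e1 + (x₁ ^ 2 + x₂ ^ 2) * hb -
          (s2 * x₁) * hy2 + (s2 * x₂) * hy1
      have hx2z : x₂ = 0 := by
        rcases mul_eq_zero.mp key with h | h
        · rcases mul_eq_zero.mp h with h' | h'
          · exact absurd h' (ne_of_gt hs1p)
          · exact h'
        · exfalso
          have hx1sq : 0 < x₁ ^ 2 := by positivity
          nlinarith [sq_nonneg x₂]
      have hc1x1 : c1 * x₁ = c2 := by
        have h : c1 * x₁ * x₁ = c2 * x₁ := by
          linear_combination e1 + s2 * hy1 + (-(c1 * x₁) + s1 * x₁ - s1 * x₂ - s2) * hx2z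
        exact mul_right_cancel₀ hx1ne h
      have hx1val : x₁ = c2 / c1 := by
        rw [eq_div_iff (ne_of_gt hc1p)]; linear_combination hc1x1
      refine ⟨Or.inl ⟨hx2z, by rw [hy1, hx2z, neg_zero], hx1val, by rw [hy2]; exact hx1val⟩, ?_⟩
      rw [Real.sin_sub, ← hs1def, ← hs2def, ← hc1def, ← hc2def]
      linear_combination s1 * hc1x1 - c1 * hb
  · exfalso
    have h1 : x₁ = 0 := by
      rcases mul_eq_zero.mp hx1K with h | h
      · exact h
      · exact absurd h hK
    have h2 : x₂ = 0 := by
      rcases mul_eq_zero.mp hx2K with h | h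
      · exact h
      · exact absurd h hK
    exact hdet (by rw [h1, h2]; ring)
end

section
/- The algebra A_2 with multiplication e_1e_1 = (√2/2)(e_1 − e_2), e_1e_2 = (√2/2)(e_1 + e_2), e_2e_1 = (√2/2)(e_1 + e_2), e_2e_2 = (√2/2)(−e_1 + e_2) is both commutative and associative. -/
/-- Structural constants of A₂ : e₁e₁ = (√2/2)(e₁ - e₂), e₁e₂ = e₂e₁ = (√2/2)(e₁ + e₂),
e₂e₂ = (√2/2)(-e₁ + e₂). -/
noncomputable def cA2 : Fin 2 → Fin 2 → Fin 2 → ℝ :=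
  ![![![Real.sqrt 2 / 2, -(Real.sqrt 2 / 2)], ![Real.sqrt 2 / 2, Real.sqrt 2 / 2]],
    ![![Real.sqrt 2 / 2, Real.sqrt 2 / 2], ![-(Real.sqrt 2 / 2), Real.sqrt 2 / 2]]]

/-- The algebra A₂ is commutative and associative. -/
theorem stmt_12 :
    (∀ x y : Fin 2 → ℝ, amul cA2 x y = amul cA2 y x) ∧
    (∀ x y z : Fin 2 → ℝ, amul cA2 (amul cA2 x y) z = amul cA2 x (amul cA2 y z)) := by
  constructor
  · intro x y
    funext k
    fin_cases k <;> simp [amul, cA2, Fin.sum_univ_two] <;> ring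
  · intro x y z
    funext k
    fin_cases k <;> · simp [amul, cA2, Fin.sum_univ_two]; ring_nf
end

section
/- The algebra A_0^+ (multiplication e_1e_1 = e_2, e_1e_2 = −e_2, e_2e_1 = −e_1, e_2e_2 = e_1) is isomorphic to the algebra with multiplication f_1f_1 = 0, f_1f_2 = f_2, f_2f_1 = 0, f_2f_2 = −f_1, via the basis change f_1 = −(1/2)(e_1 + e_2), f_2 = (1/2)(e_1 − e_2). -/
/-- Structural constants of 𝒜₈(0,0): f₁f₁ = 0, f₁f₂ = f₂, f₂f₁ = 0, f₂f₂ = -f₁. -/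
def cB : Fin 2 → Fin 2 → Fin 2 → ℝ :=
  ![![![0, 0], ![0, 1]], ![![0, 0], ![-1, 0]]]

/-! Both sides of the homomorphism identity are bilinear in `(x, y)`, so it suffices to check it on
the four pairs of standard basis vectors, where it is a comparison of multiplication tables. -/

def amulₗ (c : Fin 2 → Fin 2 → Fin 2 → ℝ) :
    (Fin 2 → ℝ) →ₗ[ℝ] (Fin 2 → ℝ) →ₗ[ℝ] (Fin 2 → ℝ) :=
  LinearMap.mk₂ ℝ (amul c)
    (fun _ _ _ => by ext; simp only [amul, Pi.add_apply, Fin.sum_univ_two]; ring)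
    (fun _ _ _ => by ext; simp only [amul, Pi.smul_apply, smul_eq_mul, Fin.sum_univ_two]; ring)
    (fun _ _ _ => by ext; simp only [amul, Pi.add_apply, Fin.sum_univ_two]; ring)
    (fun _ _ _ => by ext; simp only [amul, Pi.smul_apply, smul_eq_mul, Fin.sum_univ_two]; ring)

theorem amul_single_single (c : Fin 2 → Fin 2 → Fin 2 → ℝ) (i j : Fin 2) :
    amul c (Pi.single i 1) (Pi.single j 1) = c i j := by
  ext k
  simp [amul, Pi.single_apply]

theorem map_amul_of_map_structConst (f : (Fin 2 → ℝ) →ₗ[ℝ] (Fin 2 → ℝ))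
    (c c' : Fin 2 → Fin 2 → Fin 2 → ℝ)
    (h : ∀ i j, f (c i j) = amul c' (f (Pi.single i 1)) (f (Pi.single j 1))) (x y : Fin 2 → ℝ) :
    f (amul c x y) = amul c' (f x) (f y) := by
  have hB : (amulₗ c).compr₂ f = (amulₗ c').compl₁₂ f f :=
    LinearMap.ext_basis (Pi.basisFun ℝ (Fin 2)) (Pi.basisFun ℝ (Fin 2)) fun i j => by
      simpa [amulₗ, amul_single_single] using h i j
  simpa [amulₗ] using LinearMap.congr_fun₂ hB x y

noncomputable def basisChange : (Fin 2 → ℝ) ≃ₗ[ℝ] (Fin 2 → ℝ) :=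
  LinearEquiv.ofLinearMap (Matrix.toLin' !![-(1/2), 1/2; -(1/2), -(1/2)])
    (Matrix.toLin' !![-1, -1; 1, -1])
    (by
      rw [← Matrix.toLin'_mul, Matrix.mul_fin_two, ← Matrix.toLin'_one, Matrix.one_fin_two]
      norm_num)
    (by
      rw [← Matrix.toLin'_mul, Matrix.mul_fin_two, ← Matrix.toLin'_one, Matrix.one_fin_two]
      norm_num)

theorem basisChange_apply (x : Fin 2 → ℝ) :
    basisChange x = ![-(1/2) * x 0 + 1/2 * x 1, -(1/2) * x 0 - 1/2 * x 1] := by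
  ext k
  fin_cases k <;> simp [basisChange, Matrix.mulVec, dotProduct, Fin.sum_univ_two]; ring

/-- A₀⁺ is isomorphic to 𝒜₈(0,0) via the basis change
f₁ = -(1/2)(e₁ + e₂), f₂ = (1/2)(e₁ - e₂). -/
theorem stmt_15 :
    ∃ f : (Fin 2 → ℝ) ≃ₗ[ℝ] (Fin 2 → ℝ),
      f ![1, 0] = ![-(1/2), -(1/2)] ∧ f ![0, 1] = ![1/2, -(1/2)] ∧
      ∀ x y : Fin 2 → ℝ, f (amul cB x y) = amul cA0p (f x) (f y) := by
  refine ⟨basisChange, by simp [basisChange_apply], by simp [basisChange_apply],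
    map_amul_of_map_structConst basisChange.toLinearMap _ _ ?_⟩
  intro i j
  fin_cases i <;> fin_cases j <;>
    · ext k
      fin_cases k <;> norm_num [basisChange_apply, amul, cA0p, cB, Fin.sum_univ_two]
end
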